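/- arXiv:1605.01928 — 2 statements merged into one kernel-verified Lean document; each statement's English description precedes it below -/
import Mathlib

section
/- Let q : ℝ → ℝ be measurable, nonnegative and integrable. Then for every n ∈ ℕ, the sum of the Rayleigh quotients of the first n+1 Hermite functions for the potential x² + q(x) satisfies ∑_{k=0}^{n} R[x² + q, ψ_k] ≤ ∑_{k=0}^{n} (2k+1) + (ω_n/π) ∫_ℝ q(x) dx. (Combined with the min-max principle ∑_{k=0}^{n} λ_k ≤ ∑_{k=0}^{n} R[x²+q, ψ_k] for the eigenvalues λ_k of the perturbed harmonic oscillator −u'' + (x²+q)u = λu, this is Theorem 1 of the paper.) -/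
open Real MeasureTheory Finset

/-- The physicists' Hermite polynomials. -/
noncomputable def H : ℕ → ℝ → ℝ
  | 0, _ => 1
  | 1, x => 2 * x
  | (n + 2), x => 2 * x * H (n + 1) x - 2 * ((n : ℝ) + 1) * H n x

/-- The Hermite functions, eigenfunctions of the quantum harmonic oscillator. -/
noncomputable def psi (k : ℕ) (x : ℝ) : ℝ := Real.exp (-x ^ 2 / 2) * H k x

/-- The Rayleigh quotient of the potential `W` at the test function `φ`. -/
noncomputable def rayleigh (W φ : ℝ → ℝ) : ℝ :=
  ((∫ x : ℝ, (deriv φ x) ^ 2) + ∫ x : ℝ, W x * (φ x) ^ 2) / ∫ x : ℝ, (φ x) ^ 2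

/-- The sequence `ω_n`. -/
noncomputable def omega (n : ℕ) : ℝ :=
  if Odd n then
    ((2 * (n : ℝ) + 3) / ((n : ℝ) + 1)) * Real.Gamma ((n : ℝ) / 2 + 1) /
      Real.Gamma (((n : ℝ) + 1) / 2)
  else
    ((n : ℝ) + 1) * Real.Gamma (((n : ℝ) + 1) / 2) / Real.Gamma ((n : ℝ) / 2 + 1)

noncomputable def Hd : ℕ → ℝ → ℝ
  | 0, _ => 0
  | (k + 1), x => 2 * ((k : ℝ) + 1) * H k x

lemma H_rec (n : ℕ) (x : ℝ) :
    H (n + 2) x = 2 * x * H (n + 1) x - 2 * ((n : ℝ) + 1) * H n x := rfl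

lemma H_succ_eq (k : ℕ) (x : ℝ) : H (k + 1) x = 2 * x * H k x - Hd k x := by
  cases k with
  | zero => simp [H, Hd]
  | succ m => simp [H_rec, Hd]

lemma hasDerivAt_H (n : ℕ) (x : ℝ) : HasDerivAt (fun y => H n y) (Hd n x) x := by
  induction n using Nat.strong_induction_on with
  | _ n ih =>
    match n with
    | 0 => simpa [H, Hd] using (hasDerivAt_const x (1:ℝ))
    | 1 =>
      have : HasDerivAt (fun y : ℝ => 2 * y) 2 x := by
        simpa using (hasDerivAt_id x).const_mul (2:ℝ)
      simpa [H, Hd] using this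
    | (m + 2) =>
      have h1 : HasDerivAt (fun y => H (m+1) y) (Hd (m+1) x) x := ih (m+1) (by omega)
      have h0 : HasDerivAt (fun y => H m y) (Hd m x) x := ih m (by omega)
      have hx : HasDerivAt (fun y : ℝ => y) 1 x := hasDerivAt_id x
      have h2 : HasDerivAt (fun y => 2 * y * H (m+1) y)
          (2 * 1 * H (m+1) x + 2 * x * Hd (m+1) x) x := by
        simpa [mul_assoc] using ((hx.const_mul (2:ℝ)).fun_mul h1)
      have h4 : HasDerivAt (fun y => 2 * y * H (m+1) y - 2 * ((m:ℝ)+1) * H m y)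
          (2 * 1 * H (m+1) x + 2 * x * Hd (m+1) x - 2 * ((m:ℝ)+1) * Hd m x) x :=
        h2.sub (h0.const_mul _)
      have heq : 2 * 1 * H (m+1) x + 2 * x * Hd (m+1) x - 2 * ((m:ℝ)+1) * Hd m x
          = Hd (m+2) x := by
        have h5 := H_succ_eq m x
        simp only [Hd] at *
        push_cast
        nlinarith [h5]
      rw [heq] at h4
      exact h4.congr_of_eventuallyEq (by filter_upwards with y; rw [H_rec])

lemma H_cont (n : ℕ) : Continuous (fun x => H n x) :=
  continuous_iff_continuousAt.2 fun y => (hasDerivAt_H n y).continuousAt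

lemma H_bound (n : ℕ) : ∃ C : ℝ, 0 ≤ C ∧ ∀ x, |H n x| ≤ C * (1 + x^2)^n := by
  induction n using Nat.strong_induction_on with
  | _ n ih =>
    match n with
    | 0 => exact ⟨1, zero_le_one, fun x => by simp [H]⟩
    | 1 =>
      refine ⟨2, by norm_num, fun x => ?_⟩
      have h1 : |H 1 x| = 2 * |x| := by simp [H, abs_mul]
      nlinarith [abs_nonneg x, sq_abs x, sq_nonneg (|x| - 1)]
    | (m + 2) =>
      obtain ⟨C1, hC1, hb1⟩ := ih (m+1) (by omega)
      obtain ⟨C0, hC0, hb0⟩ := ih m (by omega)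
      refine ⟨2 * C1 + 2 * ((m:ℝ)+1) * C0, by positivity, fun x => ?_⟩
      have key : |H (m+2) x| ≤ 2 * |x| * |H (m+1) x| + 2 * ((m:ℝ)+1) * |H m x| := by
        rw [H_rec]
        calc |2 * x * H (m+1) x - 2 * ((m:ℝ)+1) * H m x|
            ≤ |2 * x * H (m+1) x| + |2 * ((m:ℝ)+1) * H m x| := abs_sub _ _
          _ = 2 * |x| * |H (m+1) x| + 2 * ((m:ℝ)+1) * |H m x| := by
              simp [abs_mul, abs_of_nonneg (show (0:ℝ) ≤ (m:ℝ)+1 by positivity)]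
      have hx2 : |x| ≤ 1 + x^2 := by nlinarith [sq_abs x, sq_nonneg (|x|-1)]
      have hp : (0:ℝ) ≤ 1 + x^2 := by positivity
      have e1 : |H (m+1) x| ≤ C1 * (1+x^2)^(m+1) := hb1 x
      have e0 : |H m x| ≤ C0 * (1+x^2)^m := hb0 x
      have hbm : (1+x^2)^m ≤ (1+x^2)^(m+2) := pow_le_pow_right₀ (by nlinarith [sq_nonneg x]) (by omega)
      calc |H (m+2) x| ≤ 2 * |x| * |H (m+1) x| + 2 * ((m:ℝ)+1) * |H m x| := key
        _ ≤ 2 * (1+x^2) * (C1 * (1+x^2)^(m+1)) + 2*((m:ℝ)+1) * (C0 * (1+x^2)^m) := by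
            have := abs_nonneg (H (m+1) x)
            gcongr
        _ ≤ (2 * C1 + 2 * ((m:ℝ)+1) * C0) * (1+x^2)^(m+2) := by
            have p2 : (1+x^2)^(m+2) = (1+x^2)^(m+1) * (1+x^2) := by ring
            nlinarith [pow_nonneg hp m, pow_nonneg hp (m+1), pow_nonneg hp (m+2),
              mul_le_mul_of_nonneg_left hbm
                (mul_nonneg (by positivity : (0:ℝ) ≤ 2*((m:ℝ)+1)) hC0)]

open Topology

lemma pow_le_factorial_mul_exp (m : ℕ) {t : ℝ} (ht : 0 ≤ t) :
    t ^ m ≤ (m.factorial : ℝ) * Real.exp t := by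
  have h := Real.sum_le_exp_of_nonneg ht (m + 1)
  have hterm : t ^ m / (m.factorial : ℝ) ≤ ∑ i ∈ range (m + 1), t ^ i / (i.factorial : ℝ) := by
    refine Finset.single_le_sum (f := fun i => t ^ i / (i.factorial : ℝ))
      (fun i _ => by positivity) (self_mem_range_succ m)
  have hfac : (0:ℝ) < (m.factorial : ℝ) := by positivity
  rw [div_le_iff₀ hfac] at hterm
  calc t ^ m ≤ Real.exp t * (m.factorial : ℝ) := le_trans hterm (by gcongr)
    _ = (m.factorial : ℝ) * Real.exp t := by ring

lemma poly_exp_le (m : ℕ) (x : ℝ) :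
    (1 + x ^ 2) ^ m * Real.exp (-x ^ 2) ≤
      (2 ^ m * (m.factorial : ℝ) * Real.exp 1) * Real.exp (-(1/2) * x ^ 2) := by
  have h1 : (1 + x ^ 2) ^ m ≤ 2 ^ m * (1 + x ^ 2 / 2) ^ m := by
    rw [← mul_pow]
    apply pow_le_pow_left₀ (by positivity)
    nlinarith [sq_nonneg x]
  have h2 : (1 + x ^ 2 / 2) ^ m ≤ (m.factorial : ℝ) * Real.exp (1 + x ^ 2 / 2) :=
    pow_le_factorial_mul_exp m (by positivity)
  have h3 : (1 + x ^ 2) ^ m ≤ 2 ^ m * (m.factorial : ℝ) * Real.exp (1 + x ^ 2 / 2) := by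
    calc (1 + x ^ 2) ^ m ≤ 2 ^ m * (1 + x ^ 2 / 2) ^ m := h1
      _ ≤ 2 ^ m * ((m.factorial : ℝ) * Real.exp (1 + x ^ 2 / 2)) := by
          gcongr
      _ = 2 ^ m * (m.factorial : ℝ) * Real.exp (1 + x ^ 2 / 2) := by ring
  have he : Real.exp (1 + x ^ 2 / 2) * Real.exp (-x ^ 2) = Real.exp 1 * Real.exp (-(1/2) * x ^ 2) := by
    rw [← Real.exp_add, ← Real.exp_add]
    ring_nf
  calc (1 + x ^ 2) ^ m * Real.exp (-x ^ 2)
      ≤ (2 ^ m * (m.factorial : ℝ) * Real.exp (1 + x ^ 2 / 2)) * Real.exp (-x ^ 2) := by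
        have := Real.exp_pos (-x ^ 2); gcongr
    _ = (2 ^ m * (m.factorial : ℝ) * Real.exp 1) * Real.exp (-(1/2) * x ^ 2) := by
        rw [mul_assoc, he]; ring

lemma integrable_gauss_poly {g : ℝ → ℝ} (hg : Continuous g) (C : ℝ) (m : ℕ)
    (hb : ∀ x, |g x| ≤ C * (1 + x ^ 2) ^ m) :
    Integrable (fun x => Real.exp (-x ^ 2) * g x) := by
  have hC : 0 ≤ C := by
    have h0 := hb 0
    simp at h0
    linarith [abs_nonneg (g 0)]
  have hint : Integrable (fun x : ℝ => (C * (2 ^ m * (m.factorial : ℝ) * Real.exp 1)) *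
      Real.exp (-(1/2) * x ^ 2)) :=
    (integrable_exp_neg_mul_sq (by norm_num : (0:ℝ) < 1/2)).const_mul _
  refine hint.mono ?_ ?_
  · exact (Real.continuous_exp.comp (continuous_pow 2).neg).mul hg |>.aestronglyMeasurable
  · filter_upwards with x
    rw [Real.norm_eq_abs, Real.norm_eq_abs, abs_mul, abs_of_nonneg (Real.exp_pos _).le]
    have h1 : Real.exp (-x ^ 2) * |g x| ≤ Real.exp (-x ^ 2) * (C * (1 + x ^ 2) ^ m) := by
      have := Real.exp_pos (-x ^ 2); gcongr; exact hb x
    have h2 := poly_exp_le m x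
    have h3 : Real.exp (-x ^ 2) * (C * (1 + x ^ 2) ^ m)
        = C * ((1 + x ^ 2) ^ m * Real.exp (-x ^ 2)) := by ring
    have h4 : C * ((1 + x ^ 2) ^ m * Real.exp (-x ^ 2))
        ≤ C * ((2 ^ m * (m.factorial : ℝ) * Real.exp 1) * Real.exp (-(1/2) * x ^ 2)) := by
      gcongr
    calc Real.exp (-x ^ 2) * |g x| ≤ C * ((2 ^ m * (m.factorial : ℝ) * Real.exp 1) *
          Real.exp (-(1/2) * x ^ 2)) := by rw [h3] at h1; linarith
      _ ≤ |C * (2 ^ m * (m.factorial : ℝ) * Real.exp 1) * Real.exp (-(1/2) * x ^ 2)| := by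
          rw [abs_of_nonneg (by positivity)]; ring_nf; exact le_refl _

lemma tendsto_gauss_poly_base (m : ℕ) :
    Filter.Tendsto (fun x : ℝ => (1 + x ^ 2) ^ m * Real.exp (-x ^ 2)) Filter.atTop (𝓝 0) := by
  have h1 : Filter.Tendsto (fun t : ℝ => t ^ m * Real.exp (-t)) Filter.atTop (𝓝 0) :=
    Real.tendsto_pow_mul_exp_neg_atTop_nhds_zero m
  have h2 : Filter.Tendsto (fun x : ℝ => 1 + x ^ 2) Filter.atTop Filter.atTop := by
    apply Filter.tendsto_atTop_mono (fun x => ?_) Filter.tendsto_id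
    show (x : ℝ) ≤ 1 + x ^ 2
    nlinarith [sq_nonneg (x - 1)]
  have h3 := h1.comp h2
  have h4 : Filter.Tendsto (fun x : ℝ => Real.exp 1 * ((1 + x ^ 2) ^ m * Real.exp (-(1 + x ^ 2))))
      Filter.atTop (𝓝 (Real.exp 1 * 0)) := h3.const_mul _
  rw [mul_zero] at h4
  refine h4.congr fun x => ?_
  rw [show (-(1 + x ^ 2)) = -1 + -x ^ 2 by ring, Real.exp_add]
  have he : Real.exp 1 * Real.exp (-1) = 1 := by rw [← Real.exp_add]; norm_num
  linear_combination ((1 + x ^ 2) ^ m * Real.exp (-x ^ 2)) * he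

lemma tendsto_gauss_poly {g : ℝ → ℝ} (C : ℝ) (m : ℕ)
    (hb : ∀ x, |g x| ≤ C * (1 + x ^ 2) ^ m) :
    Filter.Tendsto (fun x => Real.exp (-x ^ 2) * g x) Filter.atTop (𝓝 0) ∧
    Filter.Tendsto (fun x => Real.exp (-x ^ 2) * g x) Filter.atBot (𝓝 0) := by
  have hbd : ∀ x : ℝ, ‖Real.exp (-x ^ 2) * g x‖ ≤ C * ((1 + x ^ 2) ^ m * Real.exp (-x ^ 2)) := by
    intro x
    rw [Real.norm_eq_abs, abs_mul, abs_of_nonneg (Real.exp_pos _).le]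
    calc Real.exp (-x ^ 2) * |g x| ≤ Real.exp (-x ^ 2) * (C * (1 + x ^ 2) ^ m) := by
          have := Real.exp_pos (-x ^ 2); gcongr; exact hb x
      _ = C * ((1 + x ^ 2) ^ m * Real.exp (-x ^ 2)) := by ring
  have htop : Filter.Tendsto (fun x : ℝ => C * ((1 + x ^ 2) ^ m * Real.exp (-x ^ 2)))
      Filter.atTop (𝓝 0) := by
    simpa using (tendsto_gauss_poly_base m).const_mul C
  have hbot : Filter.Tendsto (fun x : ℝ => C * ((1 + x ^ 2) ^ m * Real.exp (-x ^ 2)))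
      Filter.atBot (𝓝 0) := by
    have := htop.comp Filter.tendsto_neg_atBot_atTop
    refine this.congr fun x => ?_
    simp [neg_pow]
  exact ⟨squeeze_zero_norm hbd htop, squeeze_zero_norm hbd hbot⟩

lemma integral_deriv_zero (F F' : ℝ → ℝ) (hd : ∀ x, HasDerivAt F (F' x) x)
    (hi : Integrable F') (h1 : Filter.Tendsto F Filter.atTop (𝓝 0))
    (h2 : Filter.Tendsto F Filter.atBot (𝓝 0)) : ∫ x, F' x = 0 := by
  have hIoi : ∫ x in Set.Ioi (0:ℝ), F' x = 0 - F 0 :=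
    integral_Ioi_of_hasDerivAt_of_tendsto' (fun x _ => hd x) hi.integrableOn h1
  have hIic : ∫ x in Set.Iic (0:ℝ), F' x = F 0 - 0 :=
    integral_Iic_of_hasDerivAt_of_tendsto' (fun x _ => hd x) hi.integrableOn h2
  rw [← intervalIntegral.integral_Iic_add_Ioi (b := (0:ℝ)) hi.integrableOn hi.integrableOn, hIoi, hIic]
  ring

lemma psi_sq (k : ℕ) (x : ℝ) : (psi k x) ^ 2 = Real.exp (-x ^ 2) * (H k x) ^ 2 := by
  rw [psi, mul_pow, sq (Real.exp (-x ^ 2 / 2)), ← Real.exp_add,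
    show -x ^ 2 / 2 + -x ^ 2 / 2 = -x ^ 2 by ring]

lemma hasDerivAt_psi (k : ℕ) (x : ℝ) :
    HasDerivAt (psi k) (Real.exp (-x ^ 2 / 2) * (Hd k x - x * H k x)) x := by
  have hu : HasDerivAt (fun y : ℝ => -y ^ 2 / 2) (-x) x := by
    have : HasDerivAt (fun y : ℝ => y ^ 2) (2 * x) x := by
      simpa using (hasDerivAt_pow 2 x)
    have h2 := this.fun_neg.div_const 2
    refine h2.congr_deriv ?_
    ring
  have he : HasDerivAt (fun y : ℝ => Real.exp (-y ^ 2 / 2)) (Real.exp (-x ^ 2 / 2) * (-x)) x :=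
    (Real.hasDerivAt_exp _).comp x hu
  have := he.mul (hasDerivAt_H k x)
  refine this.congr_deriv ?_
  ring

lemma deriv_psi (k : ℕ) :
    deriv (psi k) = fun x => Real.exp (-x ^ 2 / 2) * (Hd k x - x * H k x) :=
  funext fun x => (hasDerivAt_psi k x).deriv

def PolyBd (f : ℝ → ℝ) (m : ℕ) : Prop := ∃ C, 0 ≤ C ∧ ∀ x, |f x| ≤ C * (1 + x ^ 2) ^ m

lemma PolyBd.mono {f m} (h : PolyBd f m) {m' : ℕ} (hm : m ≤ m') : PolyBd f m' := by
  obtain ⟨C, hC, hb⟩ := h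
  refine ⟨C, hC, fun x => (hb x).trans ?_⟩
  have : (1 + x ^ 2) ^ m ≤ (1 + x ^ 2) ^ m' :=
    pow_le_pow_right₀ (by nlinarith [sq_nonneg x]) hm
  nlinarith [pow_nonneg (by positivity : (0:ℝ) ≤ 1 + x ^ 2) m]

lemma PolyBd.mul {f g m l} (hf : PolyBd f m) (hg : PolyBd g l) :
    PolyBd (fun x => f x * g x) (m + l) := by
  obtain ⟨C, hC, hb⟩ := hf
  obtain ⟨D, hD, hd⟩ := hg
  refine ⟨C * D, by positivity, fun x => ?_⟩
  rw [abs_mul, pow_add]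
  calc |f x| * |g x| ≤ (C * (1 + x ^ 2) ^ m) * (D * (1 + x ^ 2) ^ l) := by
        exact mul_le_mul (hb x) (hd x) (abs_nonneg _) (by positivity)
    _ = C * D * ((1 + x ^ 2) ^ m * (1 + x ^ 2) ^ l) := by ring
lemma PolyBd.add {f g m} (hf : PolyBd f m) (hg : PolyBd g m) :
    PolyBd (fun x => f x + g x) m := by
  obtain ⟨C, hC, hb⟩ := hf
  obtain ⟨D, hD, hd⟩ := hg
  refine ⟨C + D, by positivity, fun x => ?_⟩
  calc |f x + g x| ≤ |f x| + |g x| := abs_add_le _ _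
    _ ≤ C * (1 + x ^ 2) ^ m + D * (1 + x ^ 2) ^ m := add_le_add (hb x) (hd x)
    _ = (C + D) * (1 + x ^ 2) ^ m := by ring

lemma PolyBd.neg {f m} (hf : PolyBd f m) : PolyBd (fun x => -f x) m := by
  obtain ⟨C, hC, hb⟩ := hf
  exact ⟨C, hC, fun x => by rw [abs_neg]; exact hb x⟩

lemma PolyBd.sub {f g m} (hf : PolyBd f m) (hg : PolyBd g m) :
    PolyBd (fun x => f x - g x) m := by
  simpa [sub_eq_add_neg] using hf.add hg.neg

lemma PolyBd.const (c : ℝ) : PolyBd (fun _ => c) 0 :=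
  ⟨|c|, abs_nonneg c, fun x => by simp⟩

lemma PolyBd.id : PolyBd (fun x => x) 1 :=
  ⟨1, zero_le_one, fun x => by nlinarith [sq_abs x, sq_nonneg (|x| - 1), abs_nonneg x]⟩

lemma PolyBd.const_mul {f m} (hf : PolyBd f m) (c : ℝ) : PolyBd (fun x => c * f x) m := by
  simpa using (PolyBd.const c).mul hf

lemma polyBd_H (k : ℕ) : PolyBd (fun x => H k x) k := H_bound k

lemma polyBd_Hd (k : ℕ) : PolyBd (fun x => Hd k x) k := by
  cases k with
  | zero => exact ⟨0, le_refl 0, fun x => by simp [Hd]⟩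
  | succ m => exact (((polyBd_H m).const_mul (2 * ((m:ℝ) + 1))).mono (Nat.le_succ m))

lemma Hd_cont (k : ℕ) : Continuous (fun x => Hd k x) := by
  cases k with
  | zero => simpa [Hd] using continuous_const
  | succ m => exact continuous_const.mul (H_cont m)

lemma integrable_gp {g : ℝ → ℝ} (hg : Continuous g) {m : ℕ} (h : PolyBd g m) :
    Integrable (fun x => Real.exp (-x ^ 2) * g x) := by
  obtain ⟨C, _, hb⟩ := h
  exact integrable_gauss_poly hg C m hb

noncomputable def Aint (i j : ℕ) : ℝ := ∫ x : ℝ, Real.exp (-x ^ 2) * (H i x * H j x)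

lemma integrable_HH (i j : ℕ) : Integrable (fun x => Real.exp (-x ^ 2) * (H i x * H j x)) :=
  integrable_gp ((H_cont i).mul (H_cont j)) ((polyBd_H i).mul (polyBd_H j))

lemma ibp_HH (i j : ℕ) :
    ∫ x : ℝ, Real.exp (-x ^ 2) * (2 * x * (H i x * H j x)) =
    ∫ x : ℝ, Real.exp (-x ^ 2) * (Hd i x * H j x + H i x * Hd j x) := by
  set f := fun x : ℝ => Real.exp (-x ^ 2) * (2 * x * (H i x * H j x)) with hf
  set g := fun x : ℝ => Real.exp (-x ^ 2) * (Hd i x * H j x + H i x * Hd j x) with hgdef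
  have hif : Integrable f :=
    integrable_gp ((continuous_const.mul continuous_id).mul ((H_cont i).mul (H_cont j)))
      ((((PolyBd.const 2).mul PolyBd.id).mul ((polyBd_H i).mul (polyBd_H j))))
  have hig : Integrable g :=
    integrable_gp (((Hd_cont i).mul (H_cont j)).add ((H_cont i).mul (Hd_cont j)))
      ((((polyBd_Hd i).mul (polyBd_H j)).add
        (((polyBd_H i).mul (polyBd_Hd j)).mono (by omega))).mono (le_refl _))
  set F := fun x : ℝ => -(Real.exp (-x ^ 2) * (H i x * H j x)) with hF
  have hFd : ∀ x, HasDerivAt F (f x - g x) x := by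
    intro x
    have hu : HasDerivAt (fun y : ℝ => -y ^ 2) (-(2 * x)) x := by
      simpa using (hasDerivAt_pow 2 x).fun_neg
    have he : HasDerivAt (fun y : ℝ => Real.exp (-y ^ 2))
        (Real.exp (-x ^ 2) * (-(2 * x))) x := (Real.hasDerivAt_exp _).comp x hu
    have hH : HasDerivAt (fun y => H i y * H j y)
        (Hd i x * H j x + H i x * Hd j x) x := by
      have := (hasDerivAt_H i x).mul (hasDerivAt_H j x)
      refine this.congr_deriv ?_
      ring
    have := (he.mul hH).neg
    refine this.congr_deriv ?_
    simp only [hf, hgdef]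
    ring
  have htend := tendsto_gauss_poly (g := fun x => H i x * H j x) _ _
    (((polyBd_H i).mul (polyBd_H j)).choose_spec.2)
  have h0 : ∫ x : ℝ, (f x - g x) = 0 := by
    apply integral_deriv_zero F _ hFd (hif.sub hig)
    · simpa using htend.1.neg
    · simpa using htend.2.neg
  have := integral_sub hif hig
  rw [h0] at this
  linarith [this]

lemma Aint_succ_left (k j : ℕ) :
    Aint (k + 1) j = ∫ x : ℝ, Real.exp (-x ^ 2) * (H k x * Hd j x) := by
  have hsplit : ∀ x : ℝ, Real.exp (-x ^ 2) * (H (k+1) x * H j x)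
      = Real.exp (-x ^ 2) * (2 * x * (H k x * H j x))
        - Real.exp (-x ^ 2) * (Hd k x * H j x) := by
    intro x
    rw [H_succ_eq k x]
    ring
  have hi1 : Integrable (fun x => Real.exp (-x ^ 2) * (2 * x * (H k x * H j x))) :=
    integrable_gp ((continuous_const.mul continuous_id).mul ((H_cont k).mul (H_cont j)))
      (((PolyBd.const 2).mul PolyBd.id).mul ((polyBd_H k).mul (polyBd_H j)))
  have hi2 : Integrable (fun x => Real.exp (-x ^ 2) * (Hd k x * H j x)) :=
    integrable_gp ((Hd_cont k).mul (H_cont j)) ((polyBd_Hd k).mul (polyBd_H j))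
  have hi3 : Integrable (fun x => Real.exp (-x ^ 2) * (H k x * Hd j x)) :=
    integrable_gp ((H_cont k).mul (Hd_cont j)) ((polyBd_H k).mul (polyBd_Hd j))
  have e1 : Aint (k + 1) j
      = (∫ x : ℝ, Real.exp (-x ^ 2) * (2 * x * (H k x * H j x)))
        - ∫ x : ℝ, Real.exp (-x ^ 2) * (Hd k x * H j x) := by
    rw [Aint, ← integral_sub hi1 hi2]
    exact integral_congr_ae (Filter.Eventually.of_forall hsplit)
  rw [e1, ibp_HH k j]
  have e2 : ∫ x : ℝ, Real.exp (-x ^ 2) * (Hd k x * H j x + H k x * Hd j x)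
      = (∫ x : ℝ, Real.exp (-x ^ 2) * (Hd k x * H j x))
        + ∫ x : ℝ, Real.exp (-x ^ 2) * (H k x * Hd j x) := by
    rw [← integral_add hi2 hi3]
    congr 1
    funext x
    ring
  rw [e2]
  ring

lemma Aint_succ_succ (k j : ℕ) : Aint (k + 1) (j + 1) = 2 * ((j:ℝ) + 1) * Aint k j := by
  rw [Aint_succ_left, Aint, ← MeasureTheory.integral_const_mul]
  congr 1
  funext x
  simp only [Hd]
  ring

lemma Aint_succ_zero (k : ℕ) : Aint (k + 1) 0 = 0 := by
  rw [Aint_succ_left]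
  simp [Hd]

lemma Aint_zero_zero : Aint 0 0 = Real.sqrt π := by
  have := integral_gaussian 1
  simp only [one_mul, neg_mul] at this
  rw [Aint, show (fun x : ℝ => Real.exp (-x ^ 2) * (H 0 x * H 0 x)) = fun x : ℝ => Real.exp (-x ^ 2) by
    funext x; simp [H]]
  rw [this]
  norm_num

lemma Aint_diag (k : ℕ) : Aint k k = 2 ^ k * (k.factorial : ℝ) * Real.sqrt π := by
  induction k with
  | zero => simpa using Aint_zero_zero
  | succ m ih =>
    rw [Aint_succ_succ, ih]
    push_cast [Nat.factorial_succ]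
    ring


lemma energy_ptwise (k : ℕ) (x : ℝ) :
    (Hd k x - x * H k x) ^ 2 + (x * H k x) ^ 2
      = 2 * (k:ℝ) ^ 2 * (H (k - 1) x) ^ 2 + (1/2) * (H (k + 1) x) ^ 2 := by
  cases k with
  | zero => simp [H, Hd]; ring
  | succ m =>
    simp only [Hd, Nat.add_sub_cancel, H_rec]
    push_cast
    ring

lemma integral_psi_sq (k : ℕ) : ∫ x : ℝ, (psi k x) ^ 2 = Aint k k := by
  rw [Aint]
  congr 1
  funext x
  rw [psi_sq]
  ring

lemma Aint_pos (k : ℕ) : 0 < Aint k k := by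
  rw [Aint_diag]
  have : (0:ℝ) < Real.sqrt π := Real.sqrt_pos.2 pi_pos
  positivity

lemma polyBd_dpsi_core (k : ℕ) : PolyBd (fun x => (Hd k x - x * H k x) ^ 2) (2 * (k + 1)) := by
  have h1 : PolyBd (fun x => Hd k x - x * H k x) (k + 1) :=
    ((polyBd_Hd k).mono (Nat.le_succ k)).sub ((PolyBd.id.mul (polyBd_H k)).mono (by omega))
  have := h1.mul h1
  simpa [sq, two_mul] using this.mono (by omega)

lemma cont_dpsi_core (k : ℕ) : Continuous (fun x => Hd k x - x * H k x) :=
  (Hd_cont k).sub (continuous_id.mul (H_cont k))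

lemma integrable_deriv_psi_sq (k : ℕ) :
    Integrable (fun x => Real.exp (-x ^ 2) * (Hd k x - x * H k x) ^ 2) :=
  integrable_gp ((cont_dpsi_core k).pow 2) (polyBd_dpsi_core k)

lemma integrable_x_psi_sq (k : ℕ) :
    Integrable (fun x => Real.exp (-x ^ 2) * (x * H k x) ^ 2) :=
  integrable_gp ((continuous_id.mul (H_cont k)).pow 2)
    (by simpa [sq, two_mul] using ((PolyBd.id.mul (polyBd_H k)).mul
      (PolyBd.id.mul (polyBd_H k))).mono (by omega : (1 + k) + (1 + k) ≤ 2 * (k + 1)))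

lemma energy (k : ℕ) :
    (∫ x : ℝ, (deriv (psi k) x) ^ 2) + (∫ x : ℝ, x ^ 2 * (psi k x) ^ 2)
      = (2 * (k:ℝ) + 1) * Aint k k := by
  have e1 : ∀ x : ℝ, (deriv (psi k) x) ^ 2 = Real.exp (-x ^ 2) * (Hd k x - x * H k x) ^ 2 := by
    intro x
    rw [deriv_psi]
    rw [mul_pow, sq (Real.exp (-x ^ 2 / 2)), ← Real.exp_add,
      show -x ^ 2 / 2 + -x ^ 2 / 2 = -x ^ 2 by ring]
  have e2 : ∀ x : ℝ, x ^ 2 * (psi k x) ^ 2 = Real.exp (-x ^ 2) * (x * H k x) ^ 2 := by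
    intro x
    rw [psi_sq]
    ring
  rw [show (fun x : ℝ => (deriv (psi k) x) ^ 2)
      = fun x => Real.exp (-x ^ 2) * (Hd k x - x * H k x) ^ 2 from funext e1]
  rw [show (fun x : ℝ => x ^ 2 * (psi k x) ^ 2)
      = fun x => Real.exp (-x ^ 2) * (x * H k x) ^ 2 from funext e2]
  rw [← integral_add (integrable_deriv_psi_sq k) (integrable_x_psi_sq k)]
  have e3 : ∀ x : ℝ, Real.exp (-x ^ 2) * (Hd k x - x * H k x) ^ 2
      + Real.exp (-x ^ 2) * (x * H k x) ^ 2
      = 2 * (k:ℝ) ^ 2 * (Real.exp (-x ^ 2) * (H (k - 1) x * H (k - 1) x))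
        + (1/2) * (Real.exp (-x ^ 2) * (H (k + 1) x * H (k + 1) x)) := by
    intro x
    have := energy_ptwise k x
    nlinarith [Real.exp_pos (-x ^ 2)]
  rw [show (fun x : ℝ => Real.exp (-x ^ 2) * (Hd k x - x * H k x) ^ 2
      + Real.exp (-x ^ 2) * (x * H k x) ^ 2)
      = fun x => 2 * (k:ℝ) ^ 2 * (Real.exp (-x ^ 2) * (H (k - 1) x * H (k - 1) x))
        + (1/2) * (Real.exp (-x ^ 2) * (H (k + 1) x * H (k + 1) x)) from funext e3]
  rw [integral_add ((integrable_HH (k-1) (k-1)).const_mul _)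
    ((integrable_HH (k+1) (k+1)).const_mul _),
    MeasureTheory.integral_const_mul, MeasureTheory.integral_const_mul]
  show 2 * (k:ℝ) ^ 2 * Aint (k-1) (k-1) + (1/2) * Aint (k+1) (k+1) = _
  cases k with
  | zero =>
    rw [Aint_diag, Aint_diag]
    norm_num
    ring
  | succ m =>
    rw [Nat.add_sub_cancel, Aint_diag, Aint_diag, Aint_diag]
    push_cast [Nat.factorial_succ, pow_succ]
    ring

lemma psi_sq_bdd (k : ℕ) : ∃ C : ℝ, ∀ x, ‖(psi k x) ^ 2‖ ≤ C := by
  obtain ⟨C, hC, hb⟩ := polyBd_H k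
  refine ⟨C ^ 2 * (2 ^ (2 * k) * ((2 * k).factorial : ℝ) * Real.exp 1), fun x => ?_⟩
  rw [Real.norm_eq_abs, abs_of_nonneg (sq_nonneg _), psi_sq]
  have h1 : (H k x) ^ 2 ≤ C ^ 2 * (1 + x ^ 2) ^ (2 * k) := by
    have := hb x
    have h2 : (H k x) ^ 2 ≤ (C * (1 + x ^ 2) ^ k) ^ 2 := by
      rw [← sq_abs]
      exact pow_le_pow_left₀ (abs_nonneg _) this 2
    calc (H k x) ^ 2 ≤ (C * (1 + x ^ 2) ^ k) ^ 2 := h2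
      _ = C ^ 2 * (1 + x ^ 2) ^ (2 * k) := by rw [mul_pow, ← pow_mul]; ring_nf
  have h3 : Real.exp (-x ^ 2) * (H k x) ^ 2
      ≤ C ^ 2 * ((1 + x ^ 2) ^ (2 * k) * Real.exp (-x ^ 2)) := by
    have := Real.exp_pos (-x ^ 2)
    nlinarith [h1, (Real.exp_pos (-x ^ 2)).le]
  have h4 := poly_exp_le (2 * k) x
  have h5 : Real.exp (-(1/2) * x ^ 2) ≤ 1 := by
    rw [Real.exp_le_one_iff]
    nlinarith [sq_nonneg x]
  have h6 : (0:ℝ) ≤ 2 ^ (2*k) * ((2 * k).factorial : ℝ) * Real.exp 1 := by positivity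
  nlinarith [sq_nonneg C, mul_le_mul_of_nonneg_left h4 (sq_nonneg C),
    mul_le_mul_of_nonneg_left h5 (mul_nonneg (sq_nonneg C) h6)]

lemma integrable_q_psi_sq (q : ℝ → ℝ) (hmeas : Measurable q) (hint : Integrable q) (k : ℕ) :
    Integrable (fun x => q x * (psi k x) ^ 2) := by
  have hc : Continuous (fun x => (psi k x) ^ 2) := by
    have : Continuous (psi k) :=
      (Real.continuous_exp.comp ((continuous_pow 2).neg.div_const 2)).mul (H_cont k)
    exact this.pow 2
  obtain ⟨C, hC⟩ := psi_sq_bdd k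
  have := hint.bdd_mul hc.aestronglyMeasurable (Filter.Eventually.of_forall hC)
  refine this.congr (Filter.Eventually.of_forall fun x => ?_)
  ring

lemma integrable_x2_psi_sq (k : ℕ) : Integrable (fun x => x ^ 2 * (psi k x) ^ 2) := by
  refine (integrable_x_psi_sq k).congr (Filter.Eventually.of_forall fun x => ?_)
  show Real.exp (-x ^ 2) * (x * H k x) ^ 2 = x ^ 2 * (psi k x) ^ 2
  rw [psi_sq]
  ring

lemma rayleigh_eq (q : ℝ → ℝ) (hmeas : Measurable q) (hint : Integrable q) (k : ℕ) :
    rayleigh (fun x => x ^ 2 + q x) (psi k)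
      = (2 * (k:ℝ) + 1) + (∫ x : ℝ, q x * (psi k x) ^ 2) / Aint k k := by
  have hsplit : ∫ x : ℝ, (x ^ 2 + q x) * (psi k x) ^ 2
      = (∫ x : ℝ, x ^ 2 * (psi k x) ^ 2) + ∫ x : ℝ, q x * (psi k x) ^ 2 := by
    rw [← integral_add (integrable_x2_psi_sq k) (integrable_q_psi_sq q hmeas hint k)]
    congr 1
    funext x
    ring
  rw [rayleigh, integral_psi_sq, hsplit]
  have hE := energy k
  have hN := (Aint_pos k).ne'
  field_simp
  linarith [hE, mul_comm (Aint k k) ((2 * (k:ℝ) + 1))]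

noncomputable def Phi (n : ℕ) (x : ℝ) : ℝ :=
  ∑ k ∈ Finset.range (n + 1),
    Real.exp (-x ^ 2) * (H k x) ^ 2 / (2 ^ k * (k.factorial : ℝ))

lemma hasDerivAt_gauss (x : ℝ) :
    HasDerivAt (fun y : ℝ => Real.exp (-y ^ 2)) (Real.exp (-x ^ 2) * (-(2 * x))) x := by
  have hu : HasDerivAt (fun y : ℝ => -y ^ 2) (-(2 * x)) x := by
    simpa using (hasDerivAt_pow 2 x).fun_neg
  exact (Real.hasDerivAt_exp _).comp x hu

lemma hasDerivAt_Phi (n : ℕ) (x : ℝ) :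
    HasDerivAt (Phi n)
      (-(Real.exp (-x ^ 2) * (H n x * H (n + 1) x) / (2 ^ n * (n.factorial : ℝ)))) x := by
  induction n with
  | zero =>
    have h : HasDerivAt (fun y : ℝ => Real.exp (-y ^ 2)) (Real.exp (-x ^ 2) * (-(2 * x))) x :=
      hasDerivAt_gauss x
    have heq : Phi 0 = fun y : ℝ => Real.exp (-y ^ 2) := by
      funext y
      simp [Phi, H]
    rw [heq]
    refine h.congr_deriv ?_
    simp [H]
  | succ m ih =>
    have hterm : HasDerivAt
        (fun y => Real.exp (-y ^ 2) * (H (m+1) y) ^ 2 / (2 ^ (m+1) * ((m+1).factorial : ℝ)))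
        ((Real.exp (-x ^ 2) * (-(2 * x)) * (H (m+1) x) ^ 2
          + Real.exp (-x ^ 2) * (2 * H (m+1) x * Hd (m+1) x))
          / (2 ^ (m+1) * ((m+1).factorial : ℝ))) x := by
      have hsq : HasDerivAt (fun y => (H (m+1) y) ^ 2) (2 * H (m+1) x * Hd (m+1) x) x := by
        have := (hasDerivAt_H (m+1) x).fun_pow 2
        simpa [mul_comm, mul_assoc, mul_left_comm] using this
      exact ((hasDerivAt_gauss x).mul hsq).div_const _
    have heq : Phi (m+1) = fun y => Phi m y
        + Real.exp (-y ^ 2) * (H (m+1) y) ^ 2 / (2 ^ (m+1) * ((m+1).factorial : ℝ)) := by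
      funext y
      rw [Phi, Finset.sum_range_succ]
      rfl
    rw [heq]
    refine (ih.add hterm).congr_deriv ?_
    have hfac : ((m+1).factorial : ℝ) = ((m:ℝ) + 1) * (m.factorial : ℝ) := by
      push_cast [Nat.factorial_succ]
      ring
    have hHd : Hd (m+1) x = 2 * ((m:ℝ) + 1) * H m x := rfl
    have hrec : H (m + 2) x = 2 * x * H (m+1) x - 2 * ((m:ℝ) + 1) * H m x := rfl
    rw [hrec, hHd, hfac]
    have hfpos : (0:ℝ) < (m.factorial : ℝ) := by positivity
    have hmpos : (0:ℝ) < (m:ℝ) + 1 := by positivity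
    field_simp
    ring

lemma Phi_pair_le_zero (n : ℕ) (x : ℝ) :
    Phi n x + Phi (n + 1) x ≤ Phi n 0 + Phi (n + 1) 0 := by
  set W := fun y => Phi n y + Phi (n+1) y with hW
  have hd : ∀ y : ℝ, HasDerivAt W
      (-(2 * y * (Real.exp (-y ^ 2) * (H (n+1) y) ^ 2) / (2 ^ (n+1) * ((n+1).factorial : ℝ)))) y := by
    intro y
    refine ((hasDerivAt_Phi n y).add (hasDerivAt_Phi (n+1) y)).congr_deriv ?_
    have hrec : H (n + 2) y = 2 * y * H (n+1) y - 2 * ((n:ℝ) + 1) * H n y := rfl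
    have hfac : ((n+1).factorial : ℝ) = ((n:ℝ) + 1) * (n.factorial : ℝ) := by
      push_cast [Nat.factorial_succ]
      ring
    rw [hrec, hfac]
    have hfpos : (0:ℝ) < (n.factorial : ℝ) := by positivity
    have hmpos : (0:ℝ) < (n:ℝ) + 1 := by positivity
    field_simp
    ring
  have hcont : Continuous W := by
    refine continuous_iff_continuousAt.2 fun y => (hd y).continuousAt
  rcases le_total 0 x with hx | hx
  · have hanti : AntitoneOn W (Set.Ici 0) := by
      refine antitoneOn_of_deriv_nonpos (convex_Ici 0) hcont.continuousOn ?_ ?_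
      · intro y hy
        exact (hd y).differentiableAt.differentiableWithinAt
      · intro y hy
        rw [(hd y).deriv]
        rw [interior_Ici] at hy
        have hy0 : 0 < y := hy
        have : (0:ℝ) ≤ 2 * y * (Real.exp (-y ^ 2) * (H (n+1) y) ^ 2)
            / (2 ^ (n+1) * ((n+1).factorial : ℝ)) := by positivity
        linarith
    exact hanti (Set.self_mem_Ici) hx hx
  · have hmono : MonotoneOn W (Set.Iic 0) := by
      refine monotoneOn_of_deriv_nonneg (convex_Iic 0) hcont.continuousOn ?_ ?_
      · intro y hy
        exact (hd y).differentiableAt.differentiableWithinAt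
      · intro y hy
        rw [(hd y).deriv]
        rw [interior_Iic] at hy
        have hy0 : y < 0 := hy
        have h1 : 2 * y * (Real.exp (-y ^ 2) * (H (n+1) y) ^ 2)
            / (2 ^ (n+1) * ((n+1).factorial : ℝ)) ≤ 0 := by
          apply div_nonpos_of_nonpos_of_nonneg
          · have : (0:ℝ) ≤ Real.exp (-y ^ 2) * (H (n+1) y) ^ 2 := by positivity
            nlinarith
          · positivity
        linarith
    exact hmono hx (Set.self_mem_Iic) hx

lemma Phi_le_pair (n : ℕ) (x : ℝ) : 2 * Phi n x ≤ Phi n x + Phi (n + 1) x := by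
  have : Phi n x ≤ Phi (n + 1) x := by
    have he : Phi (n+1) x = Phi n x
        + Real.exp (-x ^ 2) * (H (n+1) x) ^ 2 / (2 ^ (n+1) * ((n+1).factorial : ℝ)) := by
      rw [Phi, Finset.sum_range_succ]
      rfl
    have : (0:ℝ) ≤ Real.exp (-x ^ 2) * (H (n+1) x) ^ 2 / (2 ^ (n+1) * ((n+1).factorial : ℝ)) := by
      positivity
    linarith
  linarith

lemma Phi_succ (n : ℕ) (x : ℝ) : Phi (n+1) x = Phi n x
    + Real.exp (-x ^ 2) * (H (n+1) x) ^ 2 / (2 ^ (n+1) * ((n+1).factorial : ℝ)) := by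
  rw [Phi, Finset.sum_range_succ]
  rfl

lemma H_odd_zero (m : ℕ) : H (2 * m + 1) 0 = 0 := by
  induction m with
  | zero => simp [H]
  | succ k ih =>
    have : 2 * (k + 1) + 1 = (2 * k + 1) + 2 := by omega
    rw [this, H_rec]
    rw [ih]
    ring

lemma H_even_zero (m : ℕ) : H (2 * m) 0 = (-1:ℝ)^m * ((2*m).factorial : ℝ) / (m.factorial : ℝ) := by
  induction m with
  | zero => simp [H]
  | succ k ih =>
    have h2 : 2 * (k + 1) = (2 * k) + 2 := by omega
    rw [h2, H_rec, ih]
    have hf1 : (((2*k+2).factorial : ℝ)) = (2*(k:ℝ)+2) * (2*(k:ℝ)+1) * ((2*k).factorial : ℝ) := by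
      have : (2*k+2).factorial = (2*k+2) * ((2*k+1) * (2*k).factorial) := by
        rw [show 2*k+2 = (2*k+1)+1 by omega, Nat.factorial_succ, Nat.factorial_succ]
      rw [this]
      push_cast
      ring
    have hf2 : (((k+1).factorial : ℝ)) = ((k:ℝ)+1) * (k.factorial : ℝ) := by
      rw [Nat.factorial_succ]; push_cast; ring
    have hk : (0:ℝ) < (k.factorial : ℝ) := by positivity
    rw [H_odd_zero k, hf1, hf2]
    field_simp
    push_cast
    ring

lemma Phi_zero_odd (M : ℕ) : Phi (2 * M + 1) 0 = Phi (2 * M) 0 := by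
  rw [Phi_succ, H_odd_zero]
  ring

lemma Phi_zero_even (M : ℕ) : Phi (2 * M) 0
    = (2*(M:ℝ)+1) * ((2*M).factorial : ℝ) / (4 ^ M * ((M.factorial : ℝ))^2) := by
  induction M with
  | zero => simp [Phi, H]
  | succ k ih =>
    rw [show 2*(k+1) = (2*k+1)+1 from by omega, Phi_succ, Phi_zero_odd k, ih]
    have hHe := H_even_zero (k+1)
    rw [show 2*(k+1) = (2*k+1)+1 from by omega] at hHe
    have hsq : ((-1:ℝ)^(k+1))^2 = 1 := by
      rw [← pow_mul, mul_comm, pow_mul]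
      norm_num
    have hHe2 : (H (2*k+1+1) 0)^2
        = (((2*k+1+1).factorial : ℝ))^2 / (((k+1).factorial : ℝ))^2 := by
      rw [hHe, div_pow, mul_pow, hsq, one_mul]
    rw [hHe2]
    have h4a : (2:ℝ)^(2*k+1+1) = 4^k * 4 := by
      rw [show 2*k+1+1 = 2*k+2 by omega, pow_add, pow_mul]
      norm_num
    have h4b : (4:ℝ)^(k+1) = 4^k * 4 := by rw [pow_succ]
    rw [h4a, h4b]
    have hf1 : ((((2*k+1)+1).factorial : ℝ)) = (2*(k:ℝ)+2) * (2*(k:ℝ)+1) * ((2*k).factorial : ℝ) := by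
      rw [Nat.factorial_succ, Nat.factorial_succ]
      push_cast
      ring
    have hf2 : (((k+1).factorial : ℝ)) = ((k:ℝ)+1) * (k.factorial : ℝ) := by
      rw [Nat.factorial_succ]; push_cast; ring
    have hk : (0:ℝ) < (k.factorial : ℝ) := by positivity
    have h2k : (0:ℝ) < ((2*k).factorial : ℝ) := by positivity
    rw [show Real.exp (-(0:ℝ) ^ 2) = 1 by simp]
    rw [hf1, hf2]
    push_cast
    field_simp
    ring

lemma Gamma_half (M : ℕ) : Real.Gamma ((M:ℝ) + 1/2)
    = Real.sqrt π * ((2*M).factorial : ℝ) / (4 ^ M * (M.factorial : ℝ)) := by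
  induction M with
  | zero => simpa using Real.Gamma_one_half_eq
  | succ k ih =>
    have harg : ((k:ℝ)+1) + 1/2 = ((k:ℝ) + 1/2) + 1 := by ring
    have hne : ((k:ℝ) + 1/2) ≠ 0 := by positivity
    have := Real.Gamma_add_one hne
    rw [show (((k+1):ℕ):ℝ) = (k:ℝ)+1 by push_cast; ring, harg, this, ih]
    have hf1 : (((2*(k+1)).factorial : ℝ)) = (2*(k:ℝ)+2) * (2*(k:ℝ)+1) * ((2*k).factorial : ℝ) := by
      have : (2*(k+1)).factorial = (2*k+2) * ((2*k+1) * (2*k).factorial) := by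
        rw [show 2*(k+1) = (2*k+1)+1 by omega, Nat.factorial_succ, Nat.factorial_succ]
      rw [this]; push_cast; ring
    have hf2 : (((k+1).factorial : ℝ)) = ((k:ℝ)+1) * (k.factorial : ℝ) := by
      rw [Nat.factorial_succ]; push_cast; ring
    have hk : (0:ℝ) < (k.factorial : ℝ) := by positivity
    rw [hf1, hf2]
    field_simp
    ring

lemma arith_odd (M : ℕ) :
    (2*(M:ℝ)+1) * ((2*M).factorial : ℝ) / (4 ^ M * ((M.factorial : ℝ))^2)
      + (2*((M:ℝ)+1)+1) * ((2*(M+1)).factorial : ℝ) / (4 ^ (M+1) * (((M+1).factorial : ℝ))^2)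
    = 2 * ((2 * (2*(M:ℝ)+1) + 3) / ((2*(M:ℝ)+1) + 1)
        * (Real.sqrt π * ((2*(M+1)).factorial : ℝ) / (4 ^ (M+1) * ((M+1).factorial : ℝ)))
        / (M.factorial : ℝ) / Real.sqrt π) := by
  have hsp : (0:ℝ) < Real.sqrt π := Real.sqrt_pos.2 pi_pos
  have hf1 : (((2*(M+1)).factorial : ℝ)) = (2*(M:ℝ)+2) * (2*(M:ℝ)+1) * ((2*M).factorial : ℝ) := by
    have : (2*(M+1)).factorial = (2*M+2) * ((2*M+1) * (2*M).factorial) := by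
      rw [show 2*(M+1) = (2*M+1)+1 by omega, Nat.factorial_succ, Nat.factorial_succ]
    rw [this]; push_cast; ring
  have hf2 : (((M+1).factorial : ℝ)) = ((M:ℝ)+1) * (M.factorial : ℝ) := by
    rw [Nat.factorial_succ]; push_cast; ring
  have hk : (0:ℝ) < (M.factorial : ℝ) := by positivity
  have h4b : (4:ℝ)^(M+1) = 4^M * 4 := by rw [pow_succ]
  rw [hf1, hf2, h4b]
  field_simp
  ring

lemma Phi_le_omega (n : ℕ) (x : ℝ) : Phi n x ≤ omega n / Real.sqrt π := by
  have hkey := le_trans (Phi_le_pair n x) (Phi_pair_le_zero n x)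
  have hsp : (0:ℝ) < Real.sqrt π := Real.sqrt_pos.2 pi_pos
  rcases Nat.even_or_odd n with he | ho
  · obtain ⟨M, hM⟩ := he
    have hn : n = 2 * M := by omega
    subst hn
    have hnotodd : ¬ Odd (2 * M) := by simp [Nat.odd_iff, Nat.mul_mod_right]
    rw [omega, if_neg hnotodd]
    have hc1 : ((2*M : ℕ):ℝ) / 2 + 1 = (M:ℝ) + 1 := by push_cast; ring
    have hc2 : (((2*M : ℕ):ℝ) + 1) / 2 = (M:ℝ) + 1/2 := by push_cast; ring
    rw [hc1, hc2, Gamma_half M, Real.Gamma_nat_eq_factorial]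
    have h0 : Phi (2*M+1) 0 = Phi (2*M) 0 := Phi_zero_odd M
    rw [h0, Phi_zero_even M] at hkey
    have hk : (0:ℝ) < (M.factorial : ℝ) := by positivity
    have h2k : (0:ℝ) ≤ ((2*M).factorial : ℝ) := by positivity
    have hgoal : (((2*M:ℕ):ℝ) + 1) * (Real.sqrt π * ((2*M).factorial : ℝ)
        / (4 ^ M * (M.factorial : ℝ))) / (M.factorial : ℝ) / Real.sqrt π
        = (2*(M:ℝ)+1) * ((2*M).factorial : ℝ) / (4 ^ M * ((M.factorial : ℝ))^2) := by
      push_cast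
      field_simp
    rw [hgoal]
    linarith
  · obtain ⟨M, hM⟩ := ho
    subst hM
    have hodd : Odd (2 * M + 1) := ⟨M, by omega⟩
    rw [omega, if_pos hodd]
    have hc1 : ((2*M+1 : ℕ):ℝ) / 2 + 1 = ((M:ℝ) + 1) + 1/2 := by push_cast; ring
    have hc2 : (((2*M+1 : ℕ):ℝ) + 1) / 2 = (M:ℝ) + 1 := by push_cast; ring
    rw [hc1, hc2,
      show ((M:ℝ) + 1) + 1/2 = (((M+1:ℕ)):ℝ) + 1/2 by push_cast; ring,
      Gamma_half (M+1), Real.Gamma_nat_eq_factorial]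
    have h0 : Phi (2*M+1) 0 = Phi (2*M) 0 := Phi_zero_odd M
    have h1 : Phi (2*M+1+1) 0 = Phi (2*(M+1)) 0 := by norm_num [show 2*M+1+1 = 2*(M+1) by omega]
    rw [h0, h1, Phi_zero_even M, Phi_zero_even (M+1)] at hkey
    push_cast at hkey ⊢
    linarith [arith_odd M]


lemma sum_kernel_le (n : ℕ) (x : ℝ) :
    ∑ k ∈ Finset.range (n + 1), (psi k x) ^ 2 / Aint k k ≤ omega n / π := by
  have h1 : ∑ k ∈ Finset.range (n + 1), (psi k x) ^ 2 / Aint k k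
      = Phi n x / Real.sqrt π := by
    rw [Phi, Finset.sum_div]
    refine Finset.sum_congr rfl fun k _ => ?_
    rw [psi_sq, Aint_diag, ← div_div]
  rw [h1]
  have h2 := Phi_le_omega n x
  have h3 : omega n / π = (omega n / Real.sqrt π) / Real.sqrt π := by
    rw [div_div, Real.mul_self_sqrt pi_pos.le]
  rw [h3]
  have hsp : (0:ℝ) < Real.sqrt π := Real.sqrt_pos.2 pi_pos
  gcongr

theorem sum_rayleigh_le_of_nonneg_perturbation
    (q : ℝ → ℝ) (hmeas : Measurable q) (hpos : ∀ x, 0 ≤ q x) (hint : Integrable q) (n : ℕ) :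
    ∑ k ∈ Finset.range (n + 1), rayleigh (fun x => x ^ 2 + q x) (psi k)
      ≤ (∑ k ∈ Finset.range (n + 1), (2 * (k : ℝ) + 1))
        + (omega n / π) * ∫ x : ℝ, q x := by
  have hray : ∀ k ∈ Finset.range (n + 1), rayleigh (fun x => x ^ 2 + q x) (psi k)
      = (2 * (k:ℝ) + 1) + (∫ x : ℝ, q x * (psi k x) ^ 2) / Aint k k :=
    fun k _ => rayleigh_eq q hmeas hint k
  rw [Finset.sum_congr rfl hray, Finset.sum_add_distrib]
  have hmain : ∑ k ∈ Finset.range (n + 1), (∫ x : ℝ, q x * (psi k x) ^ 2) / Aint k k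
      ≤ (omega n / π) * ∫ x : ℝ, q x := by
    have e1 : ∀ k, (∫ x : ℝ, q x * (psi k x) ^ 2) / Aint k k
        = ∫ x : ℝ, q x * (psi k x) ^ 2 / Aint k k := fun k => (integral_div _ _).symm
    have e2 : ∑ k ∈ Finset.range (n + 1), (∫ x : ℝ, q x * (psi k x) ^ 2) / Aint k k
        = ∫ x : ℝ, ∑ k ∈ Finset.range (n + 1), q x * (psi k x) ^ 2 / Aint k k := by
      rw [show (∑ k ∈ Finset.range (n + 1), (∫ x : ℝ, q x * (psi k x) ^ 2) / Aint k k)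
          = ∑ k ∈ Finset.range (n + 1), ∫ x : ℝ, q x * (psi k x) ^ 2 / Aint k k
        from Finset.sum_congr rfl fun k _ => e1 k]
      rw [← integral_finset_sum _
        (fun k _ => (integrable_q_psi_sq q hmeas hint k).div_const _)]
    rw [e2]
    have hptwise : ∀ x : ℝ, ∑ k ∈ Finset.range (n + 1), q x * (psi k x) ^ 2 / Aint k k
        ≤ q x * (omega n / π) := by
      intro x
      have hfact : ∑ k ∈ Finset.range (n + 1), q x * (psi k x) ^ 2 / Aint k k
          = q x * ∑ k ∈ Finset.range (n + 1), (psi k x) ^ 2 / Aint k k := by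
        rw [Finset.mul_sum]
        exact Finset.sum_congr rfl fun k _ => by rw [mul_div_assoc]
      rw [hfact]
      exact mul_le_mul_of_nonneg_left (sum_kernel_le n x) (hpos x)
    have hintL : Integrable (fun x => ∑ k ∈ Finset.range (n + 1),
        q x * (psi k x) ^ 2 / Aint k k) :=
      integrable_finset_sum _ (fun k _ => (integrable_q_psi_sq q hmeas hint k).div_const _)
    have hintR : Integrable (fun x => q x * (omega n / π)) := hint.mul_const _
    have := integral_mono hintL hintR hptwise
    calc ∫ x : ℝ, ∑ k ∈ Finset.range (n + 1), q x * (psi k x) ^ 2 / Aint k k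
        ≤ ∫ x : ℝ, q x * (omega n / π) := this
      _ = (omega n / π) * ∫ x : ℝ, q x := by
          rw [MeasureTheory.integral_mul_const]
          ring
  linarith
end

section
/- For every k ∈ ℕ, ∫_ℝ e^{−2x²} H_k(x)² dx = 2^{k − 1/2}·Γ(k + 1/2). -/
open Real MeasureTheory

open Polynomial in
noncomputable def Hp : ℕ → Polynomial ℝ
  | 0 => 1
  | 1 => C 2 * X
  | (n + 2) => C 2 * X * Hp (n + 1) - C (2 * ((n : ℝ) + 1)) * Hp n

open Polynomial

lemma Hp_eval : ∀ (k : ℕ) (x : ℝ), (Hp k).eval x = H k x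
  | 0, x => by simp [Hp, H]
  | 1, x => by simp [Hp, H]
  | (n + 2), x => by
      simp [Hp, H, Hp_eval (n + 1) x, Hp_eval n x]

lemma Hp_rec : ∀ k : ℕ, C (2:ℝ) * X * Hp k = Hp (k + 1) + C (2 * (k : ℝ)) * Hp (k - 1)
  | 0 => by simp [Hp]
  | (k + 1) => by
      rw [show (k + 1 + 1) = (k + 2) from rfl]
      rw [show Hp (k + 2) = C 2 * X * Hp (k + 1) - C (2 * ((k : ℝ) + 1)) * Hp k from rfl]
      push_cast
      ring

lemma Hp_derivative : ∀ k : ℕ, (Hp k).derivative = C (2 * (k : ℝ)) * Hp (k - 1)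
  | 0 => by simp [Hp]
  | 1 => by simp [Hp]
  | (k + 2) => by
      have ih1 := Hp_derivative (k + 1)
      have hrec := Hp_rec k
      rw [show Hp (k + 2) = C 2 * X * Hp (k + 1) - C (2 * ((k : ℝ) + 1)) * Hp k from rfl,
        derivative_sub, derivative_mul, derivative_mul, derivative_C, derivative_X, ih1,
        derivative_mul, derivative_C, Hp_derivative k]
      have h : C (2:ℝ) * X * Hp k = Hp (k + 1) + C (2 * (k : ℝ)) * Hp (k - 1) := Hp_rec k
      simp only [Nat.add_sub_cancel] at *
      push_cast at *
      simp only [map_mul, map_add, map_one, map_ofNat] at *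
      linear_combination ((2:Polynomial ℝ) * ((C (k:ℝ)) + 1)) * h


lemma poly_bound (P : Polynomial ℝ) : ∃ C : ℝ, ∀ x : ℝ, |P.eval x| ≤ C * Real.exp (x ^ 2) := by
  induction P using Polynomial.induction_on' with
  | add p q hp hq =>
      obtain ⟨Cp, hCp⟩ := hp
      obtain ⟨Cq, hCq⟩ := hq
      refine ⟨Cp + Cq, fun x => ?_⟩
      calc |(p + q).eval x| ≤ |p.eval x| + |q.eval x| := by
              rw [eval_add]; exact abs_add_le _ _
        _ ≤ Cp * Real.exp (x ^ 2) + Cq * Real.exp (x ^ 2) := add_le_add (hCp x) (hCq x)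
        _ = (Cp + Cq) * Real.exp (x ^ 2) := by ring
  | monomial n a =>
      refine ⟨|a| * (1 + n.factorial), fun x => ?_⟩
      have h1 : (1 : ℝ) ≤ Real.exp (x ^ 2) := Real.one_le_exp (sq_nonneg x)
      have hxn : |x| ^ n ≤ (1 + (n.factorial : ℝ)) * Real.exp (x ^ 2) := by
        rcases le_total |x| 1 with hx | hx
        · calc |x| ^ n ≤ 1 ^ n := pow_le_pow_left₀ (abs_nonneg x) hx n
            _ = 1 := one_pow n
            _ ≤ (1 + (n.factorial : ℝ)) * Real.exp (x ^ 2) := by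
                nlinarith [(Nat.cast_pos (α := ℝ)).2 n.factorial_pos]
        · have h2 : |x| ^ n ≤ (x ^ 2) ^ n := by
            calc |x| ^ n ≤ (|x| ^ 2) ^ n := by
                  apply pow_le_pow_left₀ (abs_nonneg x)
                  nlinarith
              _ = (x ^ 2) ^ n := by rw [sq_abs]
          have h3 : (x ^ 2) ^ n / n.factorial ≤ Real.exp (x ^ 2) :=
            Real.pow_div_factorial_le_exp _ (sq_nonneg x) n
          have hf : (0:ℝ) < n.factorial := Nat.cast_pos.2 n.factorial_pos
          calc |x| ^ n ≤ (x ^ 2) ^ n := h2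
            _ ≤ (n.factorial : ℝ) * Real.exp (x ^ 2) := by
                rw [div_le_iff₀ hf] at h3; linarith [h3]
            _ ≤ (1 + (n.factorial : ℝ)) * Real.exp (x ^ 2) := by nlinarith
      calc |(monomial n a).eval x| = |a| * |x| ^ n := by
            rw [eval_monomial, abs_mul, abs_pow]
        _ ≤ |a| * ((1 + (n.factorial : ℝ)) * Real.exp (x ^ 2)) :=
            mul_le_mul_of_nonneg_left hxn (abs_nonneg a)
        _ = |a| * (1 + (n.factorial : ℝ)) * Real.exp (x ^ 2) := by ring

lemma integrable_exp_poly (P : Polynomial ℝ) :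
    Integrable (fun x : ℝ => Real.exp (-2 * x ^ 2) * P.eval x) := by
  obtain ⟨C, hC⟩ := poly_bound P
  refine Integrable.mono' ((integrable_exp_neg_mul_sq one_pos).const_mul C) ?_ ?_
  · exact (Real.continuous_exp.comp (by continuity)).mul P.continuous_aeval |>.aestronglyMeasurable
  · filter_upwards with x
    have h1 : ‖Real.exp (-2 * x ^ 2) * P.eval x‖ = Real.exp (-2 * x ^ 2) * |P.eval x| := by
      rw [norm_mul, Real.norm_eq_abs, Real.norm_eq_abs, abs_of_pos (Real.exp_pos _)]
    rw [h1]
    have h2 : Real.exp (-2 * x ^ 2) * |P.eval x| ≤ Real.exp (-2 * x ^ 2) * (C * Real.exp (x ^ 2)) :=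
      mul_le_mul_of_nonneg_left (hC x) (Real.exp_pos _).le
    calc Real.exp (-2 * x ^ 2) * |P.eval x| ≤ Real.exp (-2 * x ^ 2) * (C * Real.exp (x ^ 2)) := h2
      _ = C * (Real.exp (-2 * x ^ 2) * Real.exp (x ^ 2)) := by ring
      _ = C * Real.exp (-1 * x ^ 2) := by rw [← Real.exp_add]; ring_nf
lemma hasDerivAt_exp_poly (P : Polynomial ℝ) (x : ℝ) :
    HasDerivAt (fun y : ℝ => Real.exp (-2 * y ^ 2) * P.eval y)
      (Real.exp (-2 * x ^ 2) * (P.derivative - C 4 * X * P).eval x) x := by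
  have h1 := (hasDerivAt_pow 2 x).const_mul (-2 : ℝ)
  have h2 := h1.exp
  have h3 := P.hasDerivAt x
  have h4 := h2.fun_mul h3
  refine h4.congr_deriv ?_
  simp only [eval_sub, eval_mul, eval_C, eval_X, pow_one, Nat.cast_ofNat]
  ring

noncomputable def J (P : Polynomial ℝ) : ℝ := ∫ x : ℝ, Real.exp (-2 * x ^ 2) * P.eval x

lemma J_add (P Q : Polynomial ℝ) : J (P + Q) = J P + J Q := by
  unfold J
  rw [← integral_add (integrable_exp_poly P) (integrable_exp_poly Q)]
  simp [mul_add]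

lemma J_smul (a : ℝ) (P : Polynomial ℝ) : J (C a * P) = a * J P := by
  unfold J
  rw [← integral_const_mul]
  congr 1; ext x; simp; ring

lemma J_key (P : Polynomial ℝ) : J (P.derivative - C 4 * X * P) = 0 :=
  integral_eq_zero_of_hasDerivAt_of_integrable (hasDerivAt_exp_poly P)
    (integrable_exp_poly _) (integrable_exp_poly P)

lemma J_rel (m n : ℕ) : J (Hp (m + 1) * Hp n) = - J (Hp m * Hp (n + 1)) := by
  have hkey := J_key (Hp m * Hp n)
  have hpoly : (Hp m * Hp n).derivative - C 4 * X * (Hp m * Hp n)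
      = - (Hp (m + 1) * Hp n + Hp m * Hp (n + 1)) := by
    rw [derivative_mul, Hp_derivative m, Hp_derivative n]
    have hm := Hp_rec m
    have hn := Hp_rec n
    simp only [map_mul, map_ofNat] at *
    linear_combination (- Hp n) * hm + (- Hp m) * hn
  rw [hpoly] at hkey
  have : J (-(Hp (m + 1) * Hp n + Hp m * Hp (n + 1)))
      = -(J (Hp (m + 1) * Hp n) + J (Hp m * Hp (n + 1))) := by
    have := J_smul (-1) (Hp (m + 1) * Hp n + Hp m * Hp (n + 1))
    rw [J_add] at this
    simpa using this
  rw [this] at hkey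
  linarith

lemma J_shift (m n : ℕ) : J (Hp m * Hp n) = (-1 : ℝ) ^ m * J (Hp (m + n)) := by
  induction m generalizing n with
  | zero => simp [Hp]
  | succ m ih =>
      rw [J_rel m n, ih (n + 1)]
      rw [show m + (n + 1) = m + 1 + n by omega]
      ring

lemma J_step (s : ℕ) : J (Hp (s + 2)) = -((s : ℝ) + 1) * J (Hp s) := by
  have hkey := J_key (Hp (s + 1))
  have hpoly : (Hp (s + 1)).derivative - C 4 * X * Hp (s + 1)
      = C (-2 : ℝ) * Hp (s + 2) + C (-(2 * (s : ℝ) + 2)) * Hp s := by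
    rw [Hp_derivative (s + 1)]
    have h := Hp_rec (s + 1)
    simp only [Nat.add_sub_cancel] at *
    push_cast at *
    simp only [map_mul, map_add, map_one, map_ofNat, map_neg] at *
    linear_combination (-2 : Polynomial ℝ) * h
  rw [hpoly, J_add, J_smul, J_smul] at hkey
  linarith

lemma J_even (k : ℕ) : J (Hp (2 * k))
    = (-1 : ℝ) ^ k * ((2 : ℝ) ^ ((k : ℝ) - 1 / 2) * Real.Gamma ((k : ℝ) + 1 / 2)) := by
  induction k with
  | zero =>
      have h0 : J (Hp 0) = ∫ x : ℝ, Real.exp (-2 * x ^ 2) := by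
        unfold J; simp [Hp]
      rw [show 2 * 0 = 0 from rfl, h0, integral_gaussian]
      have hc : ((0:ℕ):ℝ) = 0 := by norm_num
      rw [hc, zero_add, Real.Gamma_one_half_eq, pow_zero, one_mul]
      rw [show ((0:ℝ) - 1/2) = -(1/2) by ring, Real.rpow_neg (by norm_num)]
      rw [← Real.sqrt_eq_rpow]
      rw [show (π / 2) = π * 2⁻¹ by ring, Real.sqrt_mul Real.pi_pos.le]
      rw [Real.sqrt_inv]
      ring
  | succ k ih =>
      have hstep := J_step (2 * k)
      rw [show 2 * (k + 1) = 2 * k + 2 by ring, hstep, ih]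
      have hg : Real.Gamma (((k:ℕ):ℝ) + 1 + 1 / 2) = ((k : ℝ) + 1 / 2) * Real.Gamma ((k : ℝ) + 1 / 2) := by
        rw [show ((k:ℝ) + 1 + 1/2) = ((k:ℝ) + 1/2) + 1 by ring, Real.Gamma_add_one]
        positivity
      have hp2 : (2 : ℝ) ^ (((k:ℝ) + 1) - 1 / 2) = 2 * (2 : ℝ) ^ ((k : ℝ) - 1 / 2) := by
        rw [show ((k:ℝ) + 1 - 1/2) = ((k:ℝ) - 1/2) + 1 by ring, Real.rpow_add_one (by norm_num)]
        ring
      push_cast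
      rw [hg, hp2]
      ring

theorem integral_exp_neg_two_sq_hermite_sq (k : ℕ) :
    ∫ x : ℝ, Real.exp (-2 * x ^ 2) * (H k x) ^ 2
      = (2 : ℝ) ^ ((k : ℝ) - 1 / 2) * Real.Gamma ((k : ℝ) + 1 / 2) := by
  have h1 : (∫ x : ℝ, Real.exp (-2 * x ^ 2) * (H k x) ^ 2) = J (Hp k * Hp k) := by
    unfold J
    congr 1; ext x
    rw [eval_mul, Hp_eval]
    ring
  rw [h1, J_shift, show k + k = 2 * k by ring, J_even]
  rw [← mul_assoc, ← mul_pow]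
  norm_num
end
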